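/- Let Λ be a finite dimensional hereditary algebra and let 0 ≠ f : M → N be a homomorphism between indecomposable modules with Ext^1_Λ(N, M) = 0. Then f is injective or surjective. -/

import Mathlib

universe u v

/-- `Ext^1_Λ(M, N) = 0`, expressed by the splitting of every short exact sequence
`0 → N → E → M → 0` of `Λ`-modules. -/
def Ext1Zero (Λ : Type u) [Ring Λ] (M N : Type v) [AddCommGroup M] [Module Λ M]
    [AddCommGroup N] [Module Λ N] : Prop :=
  ∀ (E : Type v) [AddCommGroup E] [Module Λ E] (i : N →ₗ[Λ] E) (p : E →ₗ[Λ] M),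
    Function.Injective i → Function.Surjective p →
    LinearMap.range i = LinearMap.ker p →
    ∃ s : M →ₗ[Λ] E, p.comp s = LinearMap.id

/-- A ring is (left) hereditary if every left ideal is projective as a module;
equivalently, every submodule of a projective module is projective. -/
def IsHereditaryRing (Λ : Type u) [Ring Λ] : Prop :=
  ∀ I : Submodule Λ Λ, Module.Projective Λ I

/-- A module is indecomposable if it is nonzero and admits no nontrivial
direct sum decomposition. -/
def IsIndecomposableModule (Λ : Type u) [Ring Λ] (M : Type v) [AddCommGroup M]
    [Module Λ M] : Prop :=
  Nontrivial M ∧ ∀ A B : Submodule Λ M, IsCompl A B → A = ⊥ ∨ B = ⊥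

private lemma projective_of_subsingleton {Λ A : Type*} [Ring Λ] [AddCommGroup A] [Module Λ A]
    [Subsingleton A] : Module.Projective Λ A :=
  ⟨⟨0, fun _ => Subsingleton.elim _ _⟩⟩

private lemma projective_of_ses {Λ U Q : Type*} [Ring Λ] [AddCommGroup U] [Module Λ U]
    [AddCommGroup Q] [Module Λ Q] [Module.Projective Λ Q]
    (g : U →ₗ[Λ] Q) (hg : Function.Surjective g)
    (hker : Module.Projective Λ (LinearMap.ker g)) : Module.Projective Λ U := by
  obtain ⟨s, hs⟩ := Module.projective_lifting_property g LinearMap.id hg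
  have hmem : ∀ u : U, u - s (g u) ∈ LinearMap.ker g := by
    intro u
    have : g (s (g u)) = g u := LinearMap.congr_fun hs (g u)
    simp [LinearMap.mem_ker, this]
  let i : U →ₗ[Λ] (LinearMap.ker g) × Q :=
    LinearMap.prod (LinearMap.codRestrict (LinearMap.ker g) (LinearMap.id - s ∘ₗ g) hmem) g
  let s' : (LinearMap.ker g) × Q →ₗ[Λ] U :=
    (LinearMap.ker g).subtype ∘ₗ LinearMap.fst Λ _ _ + s ∘ₗ LinearMap.snd Λ _ _
  letI := hker
  exact Module.Projective.of_split i s' (by ext u; simp [i, s'])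

private lemma projective_submodule_pi {Λ : Type u} [Ring Λ] (hher : IsHereditaryRing Λ) :
    ∀ (n : ℕ) (U : Submodule Λ (Fin n → Λ)), Module.Projective Λ U := by
  intro n
  induction n with
  | zero =>
    intro U
    haveI : Subsingleton U := ⟨fun a b => Subtype.ext (funext fun i => i.elim0)⟩
    exact projective_of_subsingleton
  | succ n ih =>
    intro U
    let g : U →ₗ[Λ] Λ := (LinearMap.proj (Fin.last n)) ∘ₗ U.subtype
    letI : Module.Projective Λ (LinearMap.range g) := hher _
    apply projective_of_ses g.rangeRestrict g.surjective_rangeRestrict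
    let π : (Fin (n + 1) → Λ) →ₗ[Λ] (Fin n → Λ) := LinearMap.funLeft Λ Λ Fin.castSucc
    let e : (LinearMap.ker g.rangeRestrict) →ₗ[Λ] (Fin n → Λ) :=
      π ∘ₗ U.subtype ∘ₗ (LinearMap.ker g.rangeRestrict).subtype
    have he : Function.Injective e := by
      intro x y hxy
      ext1; ext1
      ext j
      refine Fin.lastCases ?_ ?_ j
      · have hx : g x.val = 0 :=
          congrArg Subtype.val (LinearMap.mem_ker.mp x.property)
        have hy : g y.val = 0 :=
          congrArg Subtype.val (LinearMap.mem_ker.mp y.property)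
        show (x.val.val) (Fin.last n) = (y.val.val) (Fin.last n)
        simpa [g] using hx.trans hy.symm
      · intro j
        exact congrFun hxy j
    letI := ih (LinearMap.range e)
    exact Module.Projective.of_equiv (LinearEquiv.ofInjective e he).symm

/-- **Happel–Ringel lemma** (standard form): over a finite dimensional hereditary
algebra, a nonzero homomorphism `f : M → N` between indecomposable modules with
`Ext^1(N, M) = 0` is injective or surjective. -/
theorem happel_ringel_injective_or_surjective (K : Type u) [Field K] (Λ : Type u)
    [Ring Λ] [Algebra K Λ] [FiniteDimensional K Λ] (hher : IsHereditaryRing Λ)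
    (M N : Type u) [AddCommGroup M] [Module Λ M] [Module.Finite Λ M]
    [AddCommGroup N] [Module Λ N] [Module.Finite Λ N]
    (hM : IsIndecomposableModule Λ M) (hN : IsIndecomposableModule Λ N)
    (hext : Ext1Zero Λ N M) (f : M →ₗ[Λ] N) (hf : f ≠ 0) :
    Function.Injective f ∨ Function.Surjective f := by
  by_contra hcon
  push_neg at hcon
  obtain ⟨hinj, hsurj⟩ := hcon
  classical
  -- the cokernel of `f`
  set I : Submodule Λ N := LinearMap.range f with hI
  set c : N →ₗ[Λ] N ⧸ I := I.mkQ with hc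
  -- a projective presentation of the cokernel
  obtain ⟨n, g0, hg0⟩ := Module.Finite.exists_fin' Λ N
  set P1 : Submodule Λ (Fin n → Λ) := LinearMap.ker (c ∘ₗ g0) with hP1def
  haveI hP1 : Module.Projective Λ P1 := projective_submodule_pi hher n P1
  have hwmem : ∀ p : P1, g0 p.val ∈ I := by
    intro p
    have hp : c (g0 p.val) = 0 := LinearMap.mem_ker.mp p.property
    rwa [hc, Submodule.mkQ_apply, Submodule.Quotient.mk_eq_zero] at hp
  set w : P1 →ₗ[Λ] I := LinearMap.codRestrict I (g0 ∘ₗ P1.subtype) hwmem with hwdef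
  obtain ⟨h1, hh1⟩ :=
    Module.projective_lifting_property f.rangeRestrict w f.surjective_rangeRestrict
  have hh1' : ∀ p : P1, f (h1 p) = g0 p.val := by
    intro p
    have := LinearMap.congr_fun hh1 p
    exact congrArg Subtype.val this
  -- the module E, an extension of the cokernel by M lifting 0 → I → N → N/I → 0
  set W : Submodule Λ (M × (Fin n → Λ)) := LinearMap.range (h1.prod (-P1.subtype)) with hWdef
  set a : M →ₗ[Λ] ((M × (Fin n → Λ)) ⧸ W) := W.mkQ ∘ₗ LinearMap.inl Λ M (Fin n → Λ) with hadef
  have hWq : W ≤ LinearMap.ker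
      (f ∘ₗ LinearMap.fst Λ M (Fin n → Λ) + g0 ∘ₗ LinearMap.snd Λ M (Fin n → Λ)) := by
    rintro x ⟨p, rfl⟩
    simp [LinearMap.mem_ker, hh1' p]
  set q : ((M × (Fin n → Λ)) ⧸ W) →ₗ[Λ] N := W.liftQ _ hWq with hqdef
  set b : ((M × (Fin n → Λ)) ⧸ W) →ₗ[Λ] N ⧸ I := c ∘ₗ q with hbdef
  have hqa : ∀ m : M, q (a m) = f m := by
    intro m
    simp [hqdef, hadef]
  have ha : Function.Injective a := by
    rw [← LinearMap.ker_eq_bot, Submodule.eq_bot_iff]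
    intro m hm
    have hm' : W.mkQ (m, 0) = 0 := hm
    have : ((m, 0) : M × (Fin n → Λ)) ∈ W := (Submodule.Quotient.mk_eq_zero W).mp hm'
    obtain ⟨p, hp⟩ := this
    have hp2 : (-(P1.subtype)) p = (0 : Fin n → Λ) := congrArg Prod.snd hp
    have hp0 : p = 0 := by
      have : P1.subtype p = 0 := by simpa using hp2
      exact Subtype.ext (by simpa using this)
    have := congrArg Prod.fst hp
    simp only [LinearMap.prod_apply, Pi.prod] at this
    rw [hp0] at this
    simpa using this.symm
  have hbs : Function.Surjective b := by
    intro z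
    obtain ⟨y, rfl⟩ := I.mkQ_surjective z
    obtain ⟨v, rfl⟩ := hg0 y
    refine ⟨W.mkQ (0, v), ?_⟩
    simp [hbdef, hqdef, hc]
  have hca : ∀ m : M, c (f m) = 0 := by
    intro m
    rw [hc, Submodule.mkQ_apply, Submodule.Quotient.mk_eq_zero]
    exact ⟨m, rfl⟩
  have hkerb : LinearMap.ker b = LinearMap.range a := by
    apply le_antisymm
    · intro x hx
      obtain ⟨⟨m, v⟩, rfl⟩ := W.mkQ_surjective x
      have hbx : c (f m + g0 v) = 0 := hx
      rw [map_add, hca, zero_add] at hbx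
      have hv : v ∈ P1 := LinearMap.mem_ker.mpr hbx
      refine ⟨m + h1 ⟨v, hv⟩, ?_⟩
      rw [hadef, LinearMap.comp_apply]
      rw [Submodule.mkQ_apply, Submodule.mkQ_apply, Submodule.Quotient.eq]
      refine ⟨⟨v, hv⟩, ?_⟩
      simp [Prod.ext_iff]
    · rintro _ ⟨m, rfl⟩
      have : b (a m) = c (q (a m)) := rfl
      rw [LinearMap.mem_ker, this, hqa, hca]
  -- the pullback F of E → N/I ← N, an extension of N by M
  set F : Submodule Λ (((M × (Fin n → Λ)) ⧸ W) × N) :=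
    LinearMap.ker ((b ∘ₗ LinearMap.fst Λ _ N) - (c ∘ₗ LinearMap.snd Λ _ N)) with hFdef
  have hmemF : ∀ x : ((M × (Fin n → Λ)) ⧸ W) × N, x ∈ F ↔ b x.1 = c x.2 := by
    intro x
    rw [hFdef, LinearMap.mem_ker, LinearMap.sub_apply, sub_eq_zero]
    rfl
  have hαmem : ∀ m : M, ((LinearMap.inl Λ _ N) (a m)) ∈ F := by
    intro m
    rw [hmemF]
    show b (a m) = c 0
    have : a m ∈ LinearMap.range a := ⟨m, rfl⟩
    rw [← hkerb] at this
    rw [LinearMap.mem_ker.mp this, map_zero]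
  set α : M →ₗ[Λ] F := LinearMap.codRestrict F ((LinearMap.inl Λ _ N) ∘ₗ a) hαmem with hαdef
  set β : F →ₗ[Λ] N := (LinearMap.snd Λ _ N) ∘ₗ F.subtype with hβdef
  have hαinj : Function.Injective α := by
    intro x y hxy
    apply ha
    have := congrArg (fun z : F => (z.val).1) hxy
    exact this
  have hβsurj : Function.Surjective β := by
    intro y
    obtain ⟨e0, he0⟩ := hbs (c y)
    exact ⟨⟨(e0, y), (hmemF _).mpr he0⟩, rfl⟩
  have hrange : LinearMap.range α = LinearMap.ker β := by
    apply le_antisymm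
    · rintro _ ⟨m, rfl⟩
      rfl
    · rintro ⟨⟨e0, y⟩, hmem⟩ hk
      have hy : y = 0 := hk
      subst hy
      have : b e0 = 0 := by
        have := (hmemF _).mp hmem
        simpa using this
      obtain ⟨m, hm⟩ := hkerb ▸ LinearMap.mem_ker.mpr this
      refine ⟨m, ?_⟩
      apply Subtype.ext
      apply Prod.ext
      · exact hm
      · rfl
  obtain ⟨s, hs⟩ := hext F α β hαinj hβsurj hrange
  have hsnd : ∀ x : N, ((s x).val).2 = x := fun x => LinearMap.congr_fun hs x
  set u : N →ₗ[Λ] ((M × (Fin n → Λ)) ⧸ W) :=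
    (LinearMap.fst Λ _ N) ∘ₗ F.subtype ∘ₗ s with hudef
  set θ : Module.End Λ N := q ∘ₗ u with hθdef
  have hbu : ∀ x : N, b (u x) = c x := by
    intro x
    have := (hmemF _).mp (s x).property
    rw [hudef]
    simpa [hsnd x] using this
  have hcθ : ∀ x : N, c (θ x) = c x := fun x => hbu x
  -- Fitting's lemma for θ
  letI : Module K N := Module.compHom N (algebraMap K Λ)
  haveI : IsScalarTower K Λ N := ⟨fun k l x => by
    change (k • l) • x = algebraMap K Λ k • (l • x)
    rw [Algebra.smul_def, mul_smul]⟩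
  haveI : Module.Finite K N := Module.Finite.trans Λ N
  haveI : IsNoetherian Λ N := isNoetherian_of_tower K inferInstance
  haveI : IsArtinian Λ N := isArtinian_of_tower K inferInstance
  obtain ⟨m0, hm0⟩ := Filter.eventually_atTop.mp θ.eventually_isCompl_ker_pow_range_pow
  have hcompl := hm0 (max m0 1) (le_max_left _ _)
  rcases hN.2 _ _ hcompl with hk | hr
  · -- θ is injective, hence bijective; then ker f is a direct summand of M
    have hθinj : Function.Injective θ := by
      rw [← LinearMap.ker_eq_bot, Submodule.eq_bot_iff]
      intro x hx
      have hx' : x ∈ LinearMap.ker (θ ^ max m0 1) := by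
        rw [LinearMap.mem_ker]
        obtain ⟨j, hj⟩ := Nat.exists_eq_add_of_le (le_max_right m0 1)
        rw [hj, add_comm, pow_add, pow_one, Module.End.mul_apply, LinearMap.mem_ker.mp hx,
          map_zero]
      rw [hk] at hx'
      exact hx'
    have hθbij := IsArtinian.bijective_of_injective_endomorphism θ hθinj
    set θe := LinearEquiv.ofBijective θ hθbij with hθe
    set σ : N →ₗ[Λ] ((M × (Fin n → Λ)) ⧸ W) := u ∘ₗ (θe.symm : N →ₗ[Λ] N) with hσdef
    have hqσ : ∀ x : N, q (σ x) = x := by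
      intro x
      have : θ (θe.symm x) = x := θe.apply_symm_apply x
      simpa [hσdef, hθdef] using this
    set r : ((M × (Fin n → Λ)) ⧸ W) →ₗ[Λ] ((M × (Fin n → Λ)) ⧸ W) :=
      LinearMap.id - σ ∘ₗ q with hrdef
    set A : Submodule Λ M := LinearMap.ker f with hA
    set B : Submodule Λ M := LinearMap.ker (r ∘ₗ a) with hB
    have hrapp : ∀ x, r x = x - σ (q x) := by
      intro x
      rw [hrdef]
      simp
    have hrA : ∀ m ∈ A, r (a m) = a m := by
      intro m hm
      have : q (a m) = 0 := by rw [hqa]; exact hm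
      rw [hrapp, this, map_zero, sub_zero]
    have hAB : IsCompl A B := by
      constructor
      · rw [disjoint_iff]
        rw [Submodule.eq_bot_iff]
        rintro m ⟨hmA, hmB⟩
        have h1' := hrA m hmA
        have h2' : r (a m) = 0 := hmB
        have : a m = 0 := by rw [← h1', h2']
        exact ha (by simpa using this)
      · rw [codisjoint_iff, Submodule.eq_top_iff']
        intro m
        set e0 := a m - σ (f m) with he0
        have hqe0 : q e0 = 0 := by
          rw [he0, map_sub, hqa, hqσ, sub_self]
        have hbe0 : b e0 = 0 := by
          rw [hbdef, LinearMap.comp_apply, hqe0, map_zero]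
        obtain ⟨m1, hm1⟩ := hkerb ▸ LinearMap.mem_ker.mpr hbe0
        have hfm1 : f m1 = 0 := by
          rw [← hqa, hm1, hqe0]
        have hm1A : m1 ∈ A := hfm1
        have he0fix : r e0 = e0 := by
          rw [hrapp, hqe0, map_zero, sub_zero]
        have hmB : m - m1 ∈ B := by
          show r (a (m - m1)) = 0
          rw [map_sub, map_sub, hm1, he0fix, he0, hrapp, hqa]
          abel
        have : m = m1 + (m - m1) := by abel
        rw [this]
        exact Submodule.add_mem_sup hm1A hmB
    rcases hM.2 A B hAB with hA0 | hB0
    · exact hinj (LinearMap.ker_eq_bot.mp hA0)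
    · have : A = ⊤ := by
        have := hAB.codisjoint
        rw [hB0, codisjoint_iff, sup_bot_eq] at this
        exact this
      apply hf
      ext m
      have : m ∈ A := this ▸ Submodule.mem_top
      simpa [hA] using this
  · -- θ is nilpotent, hence θ - 1 is invertible, contradicting that f is not surjective
    have hnil : IsNilpotent θ := ⟨max m0 1, LinearMap.range_eq_bot.mp hr⟩
    obtain ⟨v, hv⟩ := hnil.isUnit_sub_one
    have hsurj' : Function.Surjective (θ - 1 : Module.End Λ N) := by
      intro y
      refine ⟨(↑v⁻¹ : Module.End Λ N) y, ?_⟩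
      have : ((θ - 1) * ↑v⁻¹ : Module.End Λ N) = 1 := by
        rw [← hv]
        exact v.mul_inv
      exact LinearMap.congr_fun this y
    apply hsurj
    intro y
    obtain ⟨x, hx⟩ := hsurj' y
    have hcy : c y = 0 := by
      rw [← hx]
      have hθ1 : (θ - 1 : Module.End Λ N) x = θ x - x := rfl
      rw [hθ1, map_sub, hcθ, sub_self]
    have hyI : y ∈ I := by
      rwa [hc, Submodule.mkQ_apply, Submodule.Quotient.mk_eq_zero] at hcy
    exact hyI
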